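/- arXiv:1601.05156 — 7 statements merged into one kernel-verified Lean document; each statement's English description precedes it below -/
import Mathlib

section
/- For every real s > 0, the integral over the unit interval ∫₀¹ σ^(−3/2) (1−σ)^(−1/2) exp(−s/(2σ)) dσ equals √(2π/s) · exp(−s/2). (This is the computation showing that the random measure obtained by marking a Poisson process with intensity α σ^(−1)(1−σ)^(−1/2) on (0,1) by squared positive parts of standard Gaussians has marginal Lévy intensity proportional to exp(−s/2)/s, i.e. is a Gamma process.) -/
open MeasureTheory Real Set

/-!
Substituting `σ = 1 / (1 + t²)` maps `t ∈ (0, ∞)` bijectively onto `σ ∈ (0, 1)`, and the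
Jacobian `2t / (1 + t²)²` exactly cancels the weight `σ^(-3/2) (1 - σ)^(-1/2)`, up to the
factor `2`. Since `-s / (2σ) = -s/2 - (s/2) t²`, the integral becomes
`2 e^{-s/2} ∫₀^∞ e^{-(s/2) t²} dt = √(2π/s) e^{-s/2}`.
-/

lemma image_inv_one_add_sq_Ioi :
    (fun t : ℝ => (1 + t ^ 2)⁻¹) '' Ioi 0 = Ioo 0 1 := by
  ext σ
  constructor
  · rintro ⟨t, ht, rfl⟩
    have ht2 : 0 < t ^ 2 := pow_pos ht 2
    exact ⟨by positivity, inv_lt_one_of_one_lt₀ (by linarith)⟩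
  · rintro ⟨hσ0, hσ1⟩
    have hpos : 0 < σ⁻¹ - 1 := by linarith [one_lt_inv₀ hσ0 |>.2 hσ1]
    refine ⟨√(σ⁻¹ - 1), sqrt_pos.2 hpos, ?_⟩
    simp only [sq_sqrt hpos.le, add_sub_cancel, inv_inv]

lemma injOn_inv_one_add_sq_Ioi : InjOn (fun t : ℝ => (1 + t ^ 2)⁻¹) (Ioi 0) := by
  intro a ha b hb hab
  have hsq : a ^ 2 = b ^ 2 := by simpa using hab
  exact (pow_left_inj₀ ha.le hb.le two_ne_zero).1 hsq

lemma hasDerivAt_inv_one_add_sq (t : ℝ) :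
    HasDerivAt (fun t : ℝ => (1 + t ^ 2)⁻¹) (-(2 * t) / (1 + t ^ 2) ^ 2) t := by
  have h : HasDerivAt (fun t : ℝ => 1 + t ^ 2) (2 * t) t := by
    simpa using (hasDerivAt_pow 2 t).const_add 1
  exact h.inv (by positivity)

lemma abs_deriv_mul_weight_inv_one_add_sq {t : ℝ} (ht : 0 < t) :
    |-(2 * t) / (1 + t ^ 2) ^ 2| *
        ((1 + t ^ 2)⁻¹ ^ (-(3:ℝ)/2) * (1 - (1 + t ^ 2)⁻¹) ^ (-(1:ℝ)/2)) = 2 := by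
  have hu : 0 < 1 + t ^ 2 := by positivity
  have habs : |-(2 * t) / (1 + t ^ 2) ^ 2| = 2 * t / (1 + t ^ 2) ^ 2 := by
    rw [abs_div, abs_neg, abs_of_pos (by positivity), abs_of_pos (by positivity)]
  have hσ : (1 + t ^ 2)⁻¹ ^ (-(3:ℝ)/2) = (1 + t ^ 2) * √(1 + t ^ 2) := by
    rw [inv_rpow hu.le, ← rpow_neg hu.le, sqrt_eq_rpow, ← rpow_one_add' hu.le (by norm_num)]
    norm_num
  have hcomp : (1 - (1 + t ^ 2)⁻¹) ^ (-(1:ℝ)/2) = √(1 + t ^ 2) / t := by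
    rw [show 1 - (1 + t ^ 2)⁻¹ = (t / √(1 + t ^ 2)) ^ 2 by
          rw [div_pow, sq_sqrt hu.le]; field_simp; ring,
      ← rpow_natCast, ← rpow_mul (by positivity)]
    norm_num
    rw [rpow_neg_one, inv_div]
  rw [habs, hσ, hcomp]
  have hsqrt : √(1 + t ^ 2) * √(1 + t ^ 2) = 1 + t ^ 2 := mul_self_sqrt hu.le
  field_simp
  nlinarith [hsqrt]

theorem integral_Ioo_rpow_mul_one_sub_rpow_mul_comp_inv (g : ℝ → ℝ) :
    ∫ σ in Ioo (0:ℝ) 1, σ ^ (-(3:ℝ)/2) * (1 - σ) ^ (-(1:ℝ)/2) * g σ⁻¹ =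
      2 * ∫ t in Ioi (0:ℝ), g (1 + t ^ 2) := by
  rw [← image_inv_one_add_sq_Ioi,
    integral_image_eq_integral_abs_deriv_smul measurableSet_Ioi
      (fun t _ => (hasDerivAt_inv_one_add_sq t).hasDerivWithinAt) injOn_inv_one_add_sq_Ioi,
    ← integral_const_mul]
  refine setIntegral_congr_fun measurableSet_Ioi fun t ht => ?_
  simp only [smul_eq_mul, inv_inv, ← mul_assoc]
  rw [mul_assoc |_|, abs_deriv_mul_weight_inv_one_add_sq ht]

/-- For every real `s > 0`,
`∫₀¹ σ^(−3/2) (1−σ)^(−1/2) exp(−s/(2σ)) dσ = √(2π/s) · exp(−s/2)`. -/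
theorem stmt0 (s : ℝ) (hs : 0 < s) :
    ∫ σ in Set.Ioo (0:ℝ) 1,
        σ ^ (-(3:ℝ)/2) * (1 - σ) ^ (-(1:ℝ)/2) * Real.exp (-s / (2 * σ)) =
      Real.sqrt (2 * Real.pi / s) * Real.exp (-s / 2) := by
  have hexp : ∀ σ : ℝ, exp (-s / (2 * σ)) = exp (-(s / 2) * σ⁻¹) := fun σ => by
    congr 1; ring
  have hsplit : ∀ t : ℝ, exp (-(s / 2) * (1 + t ^ 2)) = exp (-s / 2) * exp (-(s / 2) * t ^ 2) :=
    fun t => by rw [← exp_add]; ring_nf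
  simp only [hexp]
  rw [integral_Ioo_rpow_mul_one_sub_rpow_mul_comp_inv (fun u => exp (-(s / 2) * u))]
  simp only [hsplit, integral_const_mul, integral_gaussian_Ioi]
  rw [show π / (s / 2) = 2 * π / s by field_simp]
  ring
end

section
/- For every β ∈ [0,1) and every real s > 0, ∫₀¹ σ^(−3/2−β) (1−σ)^(−1/2+β) exp(−s/(2σ)) dσ = Γ(1/2+β) · 2^(1/2+β) · s^(−1/2−β) · exp(−s/2), where Γ is the Gamma function. (This shows that replacing the Poisson intensity by α σ^(−1−β)(1−σ)^(−1/2+β) yields a marginal Lévy intensity proportional to s^(−1−β) exp(−s/2), i.e. a generalized Gamma process.) -/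
/-!
The substitution `u = 1/σ - 1` maps `(0,1)` onto `(0,∞)` with `dσ/σ² = du`, and turns
`σ^(-a-1) (1-σ)^(a-1) exp(-c/σ)` into `u^(a-1) exp(-c u) exp(-c) / σ²`. With `a = 1/2 + β` and
`c = s/2` the integral becomes `exp(-s/2)` times the Gamma integral `∫₀^∞ u^(a-1) exp(-c u) du`.
-/

open MeasureTheory Real Set

theorem image_inv_sub_one_Ioo_zero_one : (fun σ : ℝ => σ⁻¹ - 1) '' Ioo 0 1 = Ioi 0 := by
  ext u
  constructor
  · rintro ⟨σ, ⟨hσ0, hσ1⟩, rfl⟩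
    simpa [sub_pos] using (one_lt_inv_iff₀).2 ⟨hσ0, hσ1⟩
  · intro (hu : 0 < u)
    refine ⟨(1 + u)⁻¹, ⟨by positivity, inv_lt_one_of_one_lt₀ (by linarith)⟩, ?_⟩
    simp

theorem integral_Ioo_zero_one_comp_inv_sub_one {E : Type*} [NormedAddCommGroup E]
    [NormedSpace ℝ E] (g : ℝ → E) :
    ∫ σ in Ioo (0 : ℝ) 1, (σ ^ 2)⁻¹ • g (σ⁻¹ - 1) = ∫ u in Ioi (0 : ℝ), g u := by
  have hderiv : ∀ σ ∈ Ioo (0 : ℝ) 1,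
      HasDerivWithinAt (fun σ => σ⁻¹ - 1) (-(σ ^ 2)⁻¹) (Ioo 0 1) σ := fun σ hσ =>
    ((hasDerivAt_inv hσ.1.ne').sub_const 1).hasDerivWithinAt
  have hinj : InjOn (fun σ : ℝ => σ⁻¹ - 1) (Ioo 0 1) := fun a _ b _ h =>
    inv_injective (sub_left_inj.mp h)
  rw [← image_inv_sub_one_Ioo_zero_one,
    integral_image_eq_integral_abs_deriv_smul measurableSet_Ioo hderiv hinj]
  refine setIntegral_congr_fun measurableSet_Ioo fun σ hσ => ?_
  rw [abs_neg, abs_of_pos (by have := hσ.1; positivity)]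

theorem integral_Ioo_rpow_mul_one_sub_rpow_mul_exp_neg_div {a c : ℝ} (ha : 0 < a)
    (hc : 0 < c) :
    ∫ σ in Ioo (0 : ℝ) 1, σ ^ (-a - 1) * (1 - σ) ^ (a - 1) * exp (-c / σ) =
      Gamma a * c ^ (-a) * exp (-c) := by
  have hintegrand : ∀ σ ∈ Ioo (0 : ℝ) 1,
      σ ^ (-a - 1) * (1 - σ) ^ (a - 1) * exp (-c / σ) =
        (σ ^ 2)⁻¹ • ((σ⁻¹ - 1) ^ (a - 1) * exp (-(c * (σ⁻¹ - 1))) * exp (-c)) := by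
    intro σ ⟨hσ0, hσ1⟩
    have hsub : σ⁻¹ - 1 = (1 - σ) / σ := by field_simp
    have hexp : -(c * (σ⁻¹ - 1)) + -c = -c / σ := by field_simp; ring
    -- the `σ^(a-1)` cancels against the one coming from `((1-σ)/σ)^(a-1)`
    have hpow : σ ^ (-a - 1) = (σ ^ 2)⁻¹ / σ ^ (a - 1) := by
      rw [← rpow_natCast, ← rpow_neg hσ0.le, ← rpow_sub hσ0]
      ring_nf
    rw [smul_eq_mul, mul_assoc _ _ (exp (-c)), ← exp_add, hexp, hsub,
      div_rpow (by linarith) hσ0.le, hpow]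
    ring
  rw [setIntegral_congr_fun measurableSet_Ioo hintegrand,
    integral_Ioo_zero_one_comp_inv_sub_one (fun u => u ^ (a - 1) * exp (-(c * u)) * exp (-c)),
    integral_mul_const,
    integral_rpow_mul_exp_neg_mul_Ioi ha hc, one_div, inv_rpow hc.le, ← rpow_neg hc.le]
  ring

theorem stmt1_general (β s : ℝ) (hβ0 : 0 ≤ β) (hs : 0 < s) :
    ∫ σ in Set.Ioo (0:ℝ) 1,
        σ ^ (-(3:ℝ)/2 - β) * (1 - σ) ^ (-(1:ℝ)/2 + β) * Real.exp (-s / (2 * σ)) =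
      Real.Gamma (1/2 + β) * (2:ℝ) ^ ((1:ℝ)/2 + β) * s ^ (-(1:ℝ)/2 - β) *
        Real.exp (-s / 2) := by
  have key := integral_Ioo_rpow_mul_one_sub_rpow_mul_exp_neg_div
    (a := 1 / 2 + β) (c := s / 2) (by linarith) (by linarith)
  have hscale : (s / 2) ^ (-(1 / 2 + β)) = (2:ℝ) ^ ((1:ℝ)/2 + β) * s ^ (-(1:ℝ)/2 - β) := by
    rw [div_rpow hs.le zero_le_two, rpow_neg zero_le_two, div_inv_eq_mul, mul_comm]
    ring_nf
  rw [hscale, ← mul_assoc] at key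
  convert key using 3 with σ <;> ring_nf

/-- For every `β ∈ [0,1)` and `s > 0`,
`∫₀¹ σ^(−3/2−β) (1−σ)^(−1/2+β) exp(−s/(2σ)) dσ
  = Γ(1/2+β) · 2^(1/2+β) · s^(−1/2−β) · exp(−s/2)`. -/
theorem stmt1 (β s : ℝ) (hβ0 : 0 ≤ β) (hβ1 : β < 1) (hs : 0 < s) :
    ∫ σ in Set.Ioo (0:ℝ) 1,
        σ ^ (-(3:ℝ)/2 - β) * (1 - σ) ^ (-(1:ℝ)/2 + β) * Real.exp (-s / (2 * σ)) =
      Real.Gamma (1/2 + β) * (2:ℝ) ^ ((1:ℝ)/2 + β) * s ^ (-(1:ℝ)/2 - β) *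
        Real.exp (-s / 2) :=
  stmt1_general β s hβ0 hs
end

section
/- For every a with 0 < a < 1/2 and every real s > 0, ∫₀¹ b^(a−3/2) (1−b)^(−a−1/2) exp(−s/(2b)) db = Γ(1/2−a) · 2^(1/2−a) · s^(a−1/2) · exp(−s/2). (This identity is equivalent to the statement that the product of independent Beta(a, 1/2−a) and Gamma(1/2, rate 1/2) random variables has the Gamma(a, rate 1/2) distribution.) -/
/-!
The substitution `b = 1 / (1 + t)` maps `(0, ∞)` onto `(0, 1)` with Jacobian `(1 + t)⁻²` and turns
`b ^ (α - 1) * (1 - b) ^ (β - 1) db` into `t ^ (β - 1) * (1 + t) ^ (-(α + β)) dt`. Here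
`α = a - 1/2` and `β = 1/2 - a`, so `α + β = 0`, while `exp (-s / (2 * b)) = exp (-s/2) * exp (-(s/2) * t)`.
What remains is the Gamma integral `∫ t ^ (β - 1) * exp (-(s/2) * t) = (2 / s) ^ β * Γ(β)`.
-/

open MeasureTheory Real Set

lemma image_inv_one_add_Ioi_zero : (fun t : ℝ => (1 + t)⁻¹) '' Ioi 0 = Ioo 0 1 := by
  ext b
  constructor
  · rintro ⟨t, ht, rfl⟩
    have ht : (0 : ℝ) < t := ht
    exact ⟨by positivity, inv_lt_one_of_one_lt₀ (by linarith)⟩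
  · rintro ⟨hb0, hb1⟩
    refine ⟨b⁻¹ - 1, sub_pos.2 (one_lt_inv₀ hb0 |>.2 hb1), ?_⟩
    simp

theorem integral_Ioo_zero_one_eq_integral_Ioi_inv_one_add {E : Type*} [NormedAddCommGroup E]
    [NormedSpace ℝ E] (f : ℝ → E) :
    ∫ b in Ioo (0 : ℝ) 1, f b = ∫ t in Ioi (0 : ℝ), ((1 + t) ^ 2)⁻¹ • f (1 + t)⁻¹ := by
  have hderiv : ∀ t ∈ Ioi (0 : ℝ),
      HasDerivWithinAt (fun t : ℝ => (1 + t)⁻¹) (-((1 + t) ^ 2)⁻¹) (Ioi 0) t := by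
    intro t ht
    have ht : (0 : ℝ) < t := ht
    have h := ((hasDerivAt_id t).const_add 1).inv (by positivity : 1 + t ≠ 0)
    simp only [id, neg_div, one_div] at h
    exact h.hasDerivWithinAt
  have hinj : InjOn (fun t : ℝ => (1 + t)⁻¹) (Ioi 0) := fun x _ y _ h => by
    simpa using inv_injective h
  rw [← image_inv_one_add_Ioi_zero,
    integral_image_eq_integral_abs_deriv_smul measurableSet_Ioi hderiv hinj]
  refine setIntegral_congr_fun measurableSet_Ioi fun t _ => ?_
  rw [abs_neg, abs_of_nonneg (by positivity)]

lemma inv_one_add_sq_mul_rpow_mul_one_sub_rpow (α β : ℝ) {t : ℝ} (ht : 0 < t) :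
    ((1 + t) ^ 2)⁻¹ * ((1 + t)⁻¹ ^ (α - 1) * (1 - (1 + t)⁻¹) ^ (β - 1)) =
      t ^ (β - 1) * (1 + t) ^ (-(α + β)) := by
  have hu : 0 < 1 + t := by linarith
  have hsub : 1 - (1 + t)⁻¹ = t * (1 + t)⁻¹ := by field_simp; ring
  rw [hsub, mul_rpow ht.le (by positivity), inv_rpow hu.le, inv_rpow hu.le,
    ← rpow_neg hu.le, ← rpow_neg hu.le, ← rpow_two, ← rpow_neg hu.le]
  calc (1 + t) ^ (-(2 : ℝ)) * ((1 + t) ^ (-(α - 1)) * (t ^ (β - 1) * (1 + t) ^ (-(β - 1))))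
      = t ^ (β - 1) * ((1 + t) ^ (-(2 : ℝ)) * (1 + t) ^ (-(α - 1)) * (1 + t) ^ (-(β - 1))) := by
        ring
    _ = t ^ (β - 1) * (1 + t) ^ (-(α + β)) := by
        rw [← rpow_add hu, ← rpow_add hu]
        ring_nf

theorem stmt2_general (a s : ℝ) (ha1 : a < 1/2) (hs : 0 < s) :
    ∫ b in Set.Ioo (0:ℝ) 1,
        b ^ (a - (3:ℝ)/2) * (1 - b) ^ (-a - (1:ℝ)/2) * Real.exp (-s / (2 * b)) =
      Real.Gamma (1/2 - a) * (2:ℝ) ^ ((1:ℝ)/2 - a) * s ^ (a - (1:ℝ)/2) *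
        Real.exp (-s / 2) := by
  have hβ : 0 < 1/2 - a := by linarith
  have hintegrand : ∀ t ∈ Ioi (0 : ℝ),
      ((1 + t) ^ 2)⁻¹ • ((1 + t)⁻¹ ^ (a - (3:ℝ)/2) * (1 - (1 + t)⁻¹) ^ (-a - (1:ℝ)/2) *
        exp (-s / (2 * (1 + t)⁻¹))) =
      exp (-s / 2) * (t ^ ((1/2 - a) - 1) * exp (-(s / 2 * t))) := by
    intro t ht
    have hpow := inv_one_add_sq_mul_rpow_mul_one_sub_rpow (a - 1/2) (1/2 - a) ht
    rw [show a - 1/2 + (1/2 - a) = 0 by ring, neg_zero, rpow_zero, mul_one] at hpow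
    have hexp : exp (-s / (2 * (1 + t)⁻¹)) = exp (-s / 2) * exp (-(s / 2 * t)) := by
      rw [← exp_add]
      congr 1
      field_simp
      ring
    rw [smul_eq_mul, hexp, ← hpow]
    ring_nf
  have hscale : (1 / (s / 2)) ^ (1/2 - a) = (2 : ℝ) ^ ((1:ℝ)/2 - a) * s ^ (a - (1:ℝ)/2) := by
    rw [one_div_div, div_rpow zero_le_two hs.le, div_eq_mul_inv, ← rpow_neg hs.le, neg_sub]
  rw [integral_Ioo_zero_one_eq_integral_Ioi_inv_one_add,
    setIntegral_congr_fun measurableSet_Ioi hintegrand, integral_const_mul,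
    integral_rpow_mul_exp_neg_mul_Ioi hβ (by positivity), hscale]
  ring

/-- For every `0 < a < 1/2` and `s > 0`,
`∫₀¹ b^(a−3/2) (1−b)^(−a−1/2) exp(−s/(2b)) db = Γ(1/2−a) · 2^(1/2−a) · s^(a−1/2) · exp(−s/2)`. -/
theorem stmt2 (a s : ℝ) (ha0 : 0 < a) (ha1 : a < 1/2) (hs : 0 < s) :
    ∫ b in Set.Ioo (0:ℝ) 1,
        b ^ (a - (3:ℝ)/2) * (1 - b) ^ (-a - (1:ℝ)/2) * Real.exp (-s / (2 * b)) =
      Real.Gamma (1/2 - a) * (2:ℝ) ^ ((1:ℝ)/2 - a) * s ^ (a - (1:ℝ)/2) *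
        Real.exp (-s / 2) :=
  stmt2_general a s ha1 hs
end

section
/- Let Q be a standard normal random variable and σ > 0 a real number. Then the law of σ·(max(Q,0))² is the mixture (1/2)·δ₀ + (1/2)·Gamma(1/2, rate 1/(2σ)); that is, the pushforward of the standard Gaussian measure on ℝ under the map x ↦ σ·(max x 0)² equals one half times the Dirac measure at 0 plus one half times the Gamma measure with shape 1/2 and rate 1/(2σ). -/
open MeasureTheory ProbabilityTheory
open scoped ENNReal NNReal

/-!
On `(-∞, 0]` the map `x ↦ σ (max x 0)²` is constantly `0`, and this half-line has Gaussian
mass `1/2` by the symmetry `x ↦ -x`. On `(0, ∞)` it is the injective map `x ↦ σ x²` onto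
`(0, ∞)`, and the one-dimensional change of variables turns the Gaussian density `φ` into the
density of `(1/2) Gamma(1/2, 1/(2σ))`, because `σ x · gammaPDF(1/2, 1/(2σ))(σ x²) = φ(x)`.
-/

open Set Real

lemma gaussianReal_Iic_zero {v : ℝ≥0} (hv : v ≠ 0) : gaussianReal 0 v (Iic 0) = 1 / 2 := by
  have h_neg : (gaussianReal 0 v).map (fun x ↦ -x) = gaussianReal 0 v := by
    simpa using gaussianReal_map_neg (μ := 0) (v := v)
  have h_symm : gaussianReal 0 v (Iic 0) = gaussianReal 0 v (Ioi 0) := by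
    conv_lhs => rw [← h_neg]
    rw [Measure.map_apply measurable_neg measurableSet_Iic]
    refine measure_congr ?_
    have h_atom : gaussianReal 0 v {0} = 0 :=
      gaussianReal_absolutelyContinuous 0 hv (measure_singleton 0)
    simpa using (Ioi_ae_eq_Ici' h_atom).symm
  have h_total : gaussianReal 0 v (Iic 0) + gaussianReal 0 v (Ioi 0) = 1 := by
    rw [← compl_Iic, measure_add_measure_compl measurableSet_Iic, measure_univ]
  rw [ENNReal.eq_div_iff two_ne_zero ENNReal.ofNat_ne_top, two_mul]
  rwa [← h_symm] at h_total

-- With the `rpow` convention `0 ^ (a - 1) = 0` for `a ≠ 1`, even where the true density blows up.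
lemma gammaPDF_of_nonpos {a r x : ℝ} (ha : a ≠ 1) (hx : x ≤ 0) : gammaPDF a r x = 0 := by
  rcases hx.lt_or_eq with hx | rfl
  · exact gammaPDF_of_neg hx
  · simp [gammaPDF_of_nonneg le_rfl, Real.zero_rpow (sub_ne_zero.mpr ha)]

lemma map_restrict_withDensity_eq_withDensity {s : Set ℝ} {f f' : ℝ → ℝ} {g h : ℝ → ℝ≥0∞}
    (hs : MeasurableSet s) (hf : Measurable f) (hf' : ∀ x ∈ s, HasDerivWithinAt f (f' x) s x)
    (hinj : InjOn f s) (hgh : ∀ x ∈ s, ENNReal.ofReal |f' x| * h (f x) = g x)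
    (h_support : h.support ⊆ f '' s) :
    ((volume.withDensity g).restrict s).map f = volume.withDensity h := by
  ext t ht
  have hpre : MeasurableSet (f ⁻¹' t ∩ s) := (hf ht).inter hs
  rw [Measure.map_apply hf ht, Measure.restrict_apply (hf ht), withDensity_apply _ hpre,
    withDensity_apply _ ht]
  calc ∫⁻ x in f ⁻¹' t ∩ s, g x
      = ∫⁻ x in f ⁻¹' t ∩ s, ENNReal.ofReal |f' x| * h (f x) :=
        setLIntegral_congr_fun hpre fun x hx ↦ (hgh x hx.2).symm
    _ = ∫⁻ y in f '' (f ⁻¹' t ∩ s), h y :=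
        (lintegral_image_eq_lintegral_abs_deriv_mul hpre
          (fun x hx ↦ (hf' x hx.2).mono inter_subset_right) (hinj.mono inter_subset_right) h).symm
    _ = ∫⁻ y in t, h y := by
        rw [image_preimage_inter, inter_comm, ← Measure.restrict_restrict' ht]
        exact setLIntegral_eq_of_support_subset h_support

lemma image_const_mul_sq_Ioi {σ : ℝ} (hσ : 0 < σ) : (fun x ↦ σ * x ^ 2) '' Ioi 0 = Ioi 0 := by
  refine Subset.antisymm (image_subset_iff.mpr fun x hx ↦ ?_) fun y hy ↦ ?_
  · simp only [mem_preimage, mem_Ioi] at hx ⊢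
    positivity
  · refine ⟨√(y / σ), sqrt_pos.mpr (div_pos hy hσ), ?_⟩
    simp only
    rw [sq_sqrt (div_pos hy hσ).le]
    field_simp

lemma const_mul_mul_gammaPDFReal_half {σ x : ℝ} (hσ : 0 < σ) (hx : 0 < x) :
    σ * x * gammaPDFReal (1 / 2) (1 / (2 * σ)) (σ * x ^ 2) = gaussianPDFReal 0 1 x := by
  have hy : 0 ≤ σ * x ^ 2 := by positivity
  have h_pow : (σ * x ^ 2) ^ ((1 : ℝ) / 2 - 1) = (√σ * x)⁻¹ := by
    rw [show (1 : ℝ) / 2 - 1 = -(1 / 2) by norm_num, rpow_neg hy, ← sqrt_eq_rpow,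
      sqrt_mul hσ.le, sqrt_sq hx.le]
  have h_rate : (1 / (2 * σ)) ^ ((1 : ℝ) / 2) = (√2 * √σ)⁻¹ := by
    rw [← sqrt_eq_rpow, one_div, sqrt_inv, sqrt_mul zero_le_two]
  have h_exp : -(1 / (2 * σ) * (σ * x ^ 2)) = -(x - 0) ^ 2 / (2 * ((1 : ℝ≥0) : ℝ)) := by
    field_simp
    push_cast
    ring
  rw [gammaPDFReal, if_pos hy, h_pow, h_rate, Gamma_one_half_eq, h_exp, gaussianPDFReal,
    NNReal.coe_one, mul_one, mul_one, sqrt_mul zero_le_two]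
  have h_sqrt : √σ ^ 2 = σ := sq_sqrt hσ.le
  field_simp
  linear_combination (-1 : ℝ) * h_sqrt

lemma ofReal_deriv_mul_half_gammaPDF {σ x : ℝ} (hσ : 0 < σ) (hx : 0 < x) :
    ENNReal.ofReal |2 * σ * x| * (1 / 2 * gammaPDF (1 / 2) (1 / (2 * σ)) (σ * x ^ 2)) =
      gaussianPDF 0 1 x := by
  rw [gammaPDF, gaussianPDF, ← const_mul_mul_gammaPDFReal_half hσ hx, abs_of_pos (by positivity),
    ← ENNReal.ofReal_ofNat 2, ← ENNReal.ofReal_one, ← ENNReal.ofReal_div_of_pos two_pos,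
    ← ENNReal.ofReal_mul (by norm_num), ← ENNReal.ofReal_mul (by positivity)]
  congr 1
  ring

lemma map_restrict_Ioi_gaussianReal_const_mul_sq {σ : ℝ} (hσ : 0 < σ) :
    ((gaussianReal 0 1).restrict (Ioi 0)).map (fun x ↦ σ * x ^ 2) =
      (1 / 2 : ℝ≥0∞) • gammaMeasure (1 / 2) (1 / (2 * σ)) := by
  rw [gaussianReal_of_var_ne_zero 0 one_ne_zero, gammaMeasure,
    ← withDensity_smul _ (f := gammaPDF (1 / 2) (1 / (2 * σ)))
      (measurable_gammaPDFReal _ _).ennreal_ofReal]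
  refine map_restrict_withDensity_eq_withDensity measurableSet_Ioi (by fun_prop)
    (f' := fun x ↦ 2 * σ * x) (fun x _ ↦ ?_) (fun x hx y hy hxy ↦ ?_)
    (fun x hx ↦ ofReal_deriv_mul_half_gammaPDF hσ hx) ?_
  · exact ((hasDerivAt_pow 2 x).const_mul σ).hasDerivWithinAt.congr_deriv (by norm_num; ring)
  · exact (pow_left_inj₀ hx.le hy.le two_ne_zero).mp (mul_left_cancel₀ hσ.ne' hxy)
  · rw [image_const_mul_sq_Ioi hσ]
    intro y hy
    by_contra hy_nonpos
    exact hy (by rw [Pi.smul_apply, gammaPDF_of_nonpos (by norm_num) (not_lt.mp hy_nonpos),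
      smul_zero])

/-- The pushforward of the standard Gaussian measure on `ℝ` under `x ↦ σ·(max x 0)²`
is the mixture `(1/2)·δ₀ + (1/2)·Gamma(1/2, rate 1/(2σ))`. -/
theorem stmt3 (σ : ℝ) (hσ : 0 < σ) :
    (gaussianReal 0 1).map (fun x => σ * (max x 0) ^ 2) =
      (1/2 : ℝ≥0∞) • Measure.dirac (0 : ℝ) +
        (1/2 : ℝ≥0∞) • gammaMeasure (1/2) (1 / (2 * σ)) := by
  have h_neg : ((gaussianReal 0 1).restrict (Iic 0)).map (fun x ↦ σ * max x 0 ^ 2) =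
      (1 / 2 : ℝ≥0∞) • Measure.dirac 0 := by
    rw [Measure.map_congr (g := fun _ ↦ 0), Measure.map_const, Measure.restrict_apply_univ,
      gaussianReal_Iic_zero one_ne_zero]
    filter_upwards [ae_restrict_mem measurableSet_Iic] with x hx
    simp [max_eq_right (mem_Iic.mp hx)]
  have h_pos : ((gaussianReal 0 1).restrict (Ioi 0)).map (fun x ↦ σ * max x 0 ^ 2) =
      (1 / 2 : ℝ≥0∞) • gammaMeasure (1 / 2) (1 / (2 * σ)) := by
    rw [← map_restrict_Ioi_gaussianReal_const_mul_sq hσ]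
    refine Measure.map_congr ?_
    filter_upwards [ae_restrict_mem measurableSet_Ioi] with x hx
    simp [max_eq_left (mem_Ioi.mp hx).le]
  rw [← Measure.restrict_add_restrict_compl (μ := gaussianReal 0 1) measurableSet_Iic, compl_Iic,
    Measure.map_add _ _ (by fun_prop), h_neg, h_pos]
end

section
/- For every α > 0 and all 0 < δ < t < 1, the sequence n ↦ [n / B(α/n, 1/2 − α/n)] · ∫_δ^t σ^(α/n − 1) (1 − σ)^(−1/2 − α/n) dσ converges, as n → ∞, to α · ∫_δ^t σ^(−1) (1 − σ)^(−1/2) dσ, where B(p,q) = Γ(p)Γ(q)/Γ(p+q) is the Beta function. (This identifies the limiting intensity measure of the Beta approximation to the Poisson process with intensity α σ^(−1)(1−σ)^(−1/2).) -/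
open Filter MeasureTheory Real Topology Set

/-!
Since `x Γ(x) = Γ(x + 1) → 1` as `x → 0`, the prefactor `n / B(α/n, 1/2 - α/n)` equals
`α / (ε B(ε, 1/2 - ε))` with `ε = α/n → 0`, hence tends to `α`. On `[δ, t] ⊂ (0, 1)` the integrand
`σ^p (1 - σ)^q` is jointly continuous in `σ` and the exponents `(p, q)`, so the integral is
continuous in `(p, q)` and converges as `(α/n - 1, -1/2 - α/n) → (-1, -1/2)`.
-/

namespace Real

lemma continuousAt_Gamma_of_pos {s : ℝ} (hs : 0 < s) : ContinuousAt Gamma s :=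
  (differentiableAt_Gamma fun m => by linarith [(m.cast_nonneg : (0 : ℝ) ≤ m)]).continuousAt

lemma tendsto_self_mul_Gamma_nhds_zero : Tendsto (fun x => x * Gamma x) (𝓝[≠] 0) (𝓝 1) := by
  have hcont : Tendsto (fun x => Gamma (x + 1)) (𝓝 0) (𝓝 (Gamma 1)) :=
    (continuousAt_Gamma_of_pos one_pos).tendsto.comp
      ((continuous_add_const 1).tendsto' 0 1 (zero_add 1))
  rw [Gamma_one] at hcont
  exact (hcont.mono_left nhdsWithin_le_nhds).congr' <|
    eventually_nhdsWithin_of_forall fun x hx => Gamma_add_one hx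

lemma tendsto_self_mul_beta_nhds_zero {c : ℝ} (hc : 0 < c) :
    Tendsto (fun x => x * (Gamma x * Gamma (c - x) / Gamma (x + (c - x)))) (𝓝[≠] 0) (𝓝 1) := by
  have hc' : Tendsto (fun x => Gamma (c - x)) (𝓝[≠] 0) (𝓝 (Gamma c)) :=
    ((continuousAt_Gamma_of_pos hc).tendsto.comp
      ((continuous_sub_left c).tendsto' 0 c (sub_zero c))).mono_left nhdsWithin_le_nhds
  have := (tendsto_self_mul_Gamma_nhds_zero.mul hc').div_const (Gamma c)
  rw [one_mul, div_self (Gamma_pos_of_pos hc).ne'] at this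
  refine this.congr fun x => ?_
  rw [add_sub_cancel, mul_assoc, mul_div_assoc]

lemma tendsto_natCast_div_beta {α c : ℝ} (hα : α ≠ 0) (hc : 0 < c) :
    Tendsto (fun n : ℕ => (n : ℝ) /
      (Gamma (α / n) * Gamma (c - α / n) / Gamma (α / n + (c - α / n)))) atTop (𝓝 α) := by
  have hε : Tendsto (fun n : ℕ => α / (n : ℝ)) atTop (𝓝[≠] 0) :=
    tendsto_nhdsWithin_iff.2 ⟨tendsto_const_div_atTop_nhds_zero_nat α,
      (eventually_ne_atTop 0).mono fun n hn => div_ne_zero hα (Nat.cast_ne_zero.2 hn)⟩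
  have := tendsto_const_nhds (x := α) |>.div ((tendsto_self_mul_beta_nhds_zero hc).comp hε)
    one_ne_zero
  rw [div_one] at this
  refine this.congr fun n => ?_
  simp only [Pi.div_apply, Function.comp_apply]
  rw [div_mul_eq_mul_div, div_div_eq_mul_div, mul_div_mul_left _ _ hα]

end Real

lemma continuous_integral_rpow_mul_one_sub_rpow {δ t : ℝ} (hδ : 0 < δ) (ht : t < 1) :
    Continuous fun p : ℝ × ℝ => ∫ σ in Ioo δ t, σ ^ p.1 * (1 - σ) ^ p.2 := by
  -- clamping `σ` into `[δ, t]` makes the integrand jointly continuous without changing it there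
  let f : ℝ × ℝ → ℝ → ℝ := fun p σ => max σ δ ^ p.1 * (1 - min σ t) ^ p.2
  have hf : Continuous f.uncurry := by
    refine Continuous.mul ?_ ?_
    · exact (continuous_snd.max continuous_const).rpow (continuous_fst.comp continuous_fst)
        fun x => Or.inl (hδ.trans_le (le_max_right _ _)).ne'
    · exact (continuous_const.sub (continuous_snd.min continuous_const)).rpow
        (continuous_snd.comp continuous_fst)
        fun x => Or.inl (sub_pos.2 ((min_le_right x.2 t).trans_lt ht)).ne'
  refine (continuous_parametric_integral_of_continuous (μ := volume) hf
    (isCompact_Icc (a := δ) (b := t))).congr fun p => ?_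
  rw [integral_Icc_eq_integral_Ioo]
  refine setIntegral_congr_fun measurableSet_Ioo fun σ hσ => ?_
  simp only [f, max_eq_left hσ.1.le, min_eq_left hσ.2.le]

theorem stmt5_general (α δ t : ℝ) (hα : 0 < α) (hδ : 0 < δ) (ht : t < 1) :
    Tendsto
      (fun n : ℕ =>
        ((n : ℝ) /
            (Real.Gamma (α / (n : ℝ)) * Real.Gamma (1/2 - α / (n : ℝ)) /
              Real.Gamma (α / (n : ℝ) + (1/2 - α / (n : ℝ))))) *
          ∫ σ in Set.Ioo δ t,
            σ ^ (α / (n : ℝ) - 1) * (1 - σ) ^ (-(1:ℝ)/2 - α / (n : ℝ)))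
      atTop
      (nhds (α * ∫ σ in Set.Ioo δ t, σ ^ (-(1:ℝ)) * (1 - σ) ^ (-(1:ℝ)/2))) := by
  have hε := tendsto_const_div_atTop_nhds_zero_nat α
  have hexp : Tendsto (fun n : ℕ => (α / (n : ℝ) - 1, -(1:ℝ)/2 - α / n)) atTop
      (𝓝 (-1, -(1:ℝ)/2)) := by
    simpa using (hε.sub_const 1).prodMk_nhds (tendsto_const_nhds.sub hε)
  exact (Real.tendsto_natCast_div_beta hα.ne' one_half_pos).mul
    ((continuous_integral_rpow_mul_one_sub_rpow hδ ht).tendsto _ |>.comp hexp)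

/-- For every `α > 0` and `0 < δ < t < 1`,
`[n / B(α/n, 1/2 − α/n)] · ∫_δ^t σ^(α/n − 1) (1 − σ)^(−1/2 − α/n) dσ
  → α · ∫_δ^t σ^(−1) (1 − σ)^(−1/2) dσ` as `n → ∞`,
where `B(p,q) = Γ(p)Γ(q)/Γ(p+q)` is the Beta function. -/
theorem stmt5 (α δ t : ℝ) (hα : 0 < α) (hδ : 0 < δ) (hδt : δ < t) (ht : t < 1) :
    Tendsto
      (fun n : ℕ =>
        ((n : ℝ) /
            (Real.Gamma (α / (n : ℝ)) * Real.Gamma (1/2 - α / (n : ℝ)) /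
              Real.Gamma (α / (n : ℝ) + (1/2 - α / (n : ℝ))))) *
          ∫ σ in Set.Ioo δ t,
            σ ^ (α / (n : ℝ) - 1) * (1 - σ) ^ (-(1:ℝ)/2 - α / (n : ℝ)))
      atTop
      (nhds (α * ∫ σ in Set.Ioo δ t, σ ^ (-(1:ℝ)) * (1 - σ) ^ (-(1:ℝ)/2))) :=
  stmt5_general α δ t hα hδ ht
end

section
/- Let (Ω, P) be a probability space, (E, ℰ) a measurable space, and Z₁, Z₂, … an i.i.d. sequence of E-valued random variables with common distribution G. Let w = (wᵢ) and w' = (w'ᵢ) be sequences of nonnegative reals with Σᵢ wᵢ = 1 and Σᵢ w'ᵢ = 1, and for a measurable set A define P_w(A) = Σᵢ wᵢ·1{Zᵢ ∈ A} and P_{w'}(A) = Σᵢ w'ᵢ·1{Zᵢ ∈ A}. Then for every measurable set A with 0 < G(A) < 1, the correlation Cov(P_w(A), P_{w'}(A)) / √(Var(P_w(A)) · Var(P_{w'}(A))) equals Σᵢ wᵢ w'ᵢ / √((Σᵢ wᵢ²)·(Σᵢ w'ᵢ²)); in particular it does not depend on the set A. (This is the conditional-on-weights version of Proposition 1: the correlation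 of two dependent random probability measures at a common set depends only on the weight sequences, not on the set.) -/
/-!
Write `Xᵢ = 1{Zᵢ ∈ A}` and `p = G(A)`. The `Xᵢ` are Bernoulli(`p`) and pairwise independent, so
`E[Xᵢ Xⱼ] = p²` for `i ≠ j` and `E[Xᵢ²] = p`. Since the weights are summable and the `Xᵢ` bounded,
expectations may be exchanged with the series defining `P_w(A)`, which gives
`Cov(P_w(A), P_{w'}(A)) = p(1 - p) Σᵢ wᵢ w'ᵢ` and in particular `Var(P_w(A)) = p(1 - p) Σᵢ wᵢ²`.
For `0 < p < 1` the common factor `p(1 - p)` cancels in the correlation.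
-/

open MeasureTheory ProbabilityTheory

/-- The random probability of a set under weights `w`: `P_w(A)(ω) = Σᵢ wᵢ·1{Zᵢ(ω) ∈ A}`. -/
noncomputable def randProb {Ω E : Type*} (w : ℕ → ℝ) (Z : ℕ → Ω → E) (A : Set E) (ω : Ω) : ℝ :=
  ∑' i, w i * Set.indicator A (fun _ => (1 : ℝ)) (Z i ω)

lemma summable_of_tsum_eq_one {ι : Type*} {w : ι → ℝ} (hw1 : ∑' i, w i = 1) : Summable w := by
  by_contra hw
  simp [tsum_eq_zero_of_not_summable hw] at hw1

lemma tsum_mul_ite_eq {ι : Type*} [DecidableEq ι] {w : ι → ℝ} (hw : Summable w) (i : ι)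
    (a b : ℝ) :
    ∑' j, w j * (if i = j then a else b) = b * ∑' j, w j + (a - b) * w i := by
  have hsplit : ∀ j, w j * (if i = j then a else b) =
      b * w j + if j = i then (a - b) * w i else 0 := by
    intro j
    by_cases hij : i = j
    · subst hij; simp only [if_true]; ring
    · simp [hij, Ne.symm hij, mul_comm]
  simp_rw [hsplit]
  rw [(hw.mul_left b).tsum_add ((hasSum_ite_eq i _).summable), tsum_mul_left, tsum_ite_eq]

lemma abs_tsum_mul_le_one {ι : Type*} {w f : ι → ℝ} (hw : ∀ i, 0 ≤ w i)
    (hw1 : ∑' i, w i = 1) (hf : ∀ i, |f i| ≤ 1) :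
    |∑' i, w i * f i| ≤ 1 := by
  have hterm : ∀ i, |w i * f i| ≤ w i := fun i => by
    rw [abs_mul, abs_of_nonneg (hw i)]
    exact mul_le_of_le_one_right (hw i) (hf i)
  have hsw := summable_of_tsum_eq_one hw1
  have habs : Summable fun i => |w i * f i| :=
    hsw.of_nonneg_of_le (fun i => abs_nonneg _) hterm
  calc |∑' i, w i * f i| ≤ ∑' i, |w i * f i| := by
        simpa only [Real.norm_eq_abs] using norm_tsum_le_tsum_norm (f := fun i => w i * f i) habs
    _ ≤ ∑' i, w i := habs.tsum_le_tsum hterm hsw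
    _ = 1 := hw1

lemma integral_tsum_mul_of_abs_le_one {ι Ω : Type*} [Countable ι] [MeasurableSpace Ω]
    {μ : Measure Ω} [IsFiniteMeasure μ] {w : ι → ℝ} {f : ι → Ω → ℝ} (hw : Summable w)
    (hf : ∀ i, AEStronglyMeasurable (f i) μ) (hf1 : ∀ i ω, |f i ω| ≤ 1) :
    ∫ ω, ∑' i, w i * f i ω ∂μ = ∑' i, w i * ∫ ω, f i ω ∂μ := by
  have hint : ∀ i, Integrable (fun ω => w i * f i ω) μ := fun i =>
    (Integrable.of_bound (hf i) 1 (ae_of_all _ (hf1 i))).const_mul (w i)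
  have hnorm : ∀ i, ∫ ω, ‖w i * f i ω‖ ∂μ ≤ |w i| * μ.real Set.univ := fun i => by
    calc ∫ ω, ‖w i * f i ω‖ ∂μ ≤ ∫ _, |w i| ∂μ :=
          integral_mono (hint i).norm (integrable_const _) fun ω => by
            rw [Real.norm_eq_abs, abs_mul]
            exact mul_le_of_le_one_right (abs_nonneg _) (hf1 i ω)
      _ = |w i| * μ.real Set.univ := by rw [integral_const, smul_eq_mul, mul_comm]
  rw [← integral_tsum_of_summable_integral_norm hint
    ((hw.abs.mul_right _).of_nonneg_of_le (fun i => integral_nonneg fun _ => norm_nonneg _) hnorm)]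
  simp_rw [integral_const_mul]

lemma abs_indicator_one_le_one {E : Type*} (A : Set E) (x : E) :
    |A.indicator (fun _ => (1 : ℝ)) x| ≤ 1 := by
  by_cases hx : x ∈ A <;> simp [hx]

lemma abs_randProb_le_one {Ω E : Type*} {Z : ℕ → Ω → E} {A : Set E} {w : ℕ → ℝ}
    (hw : ∀ i, 0 ≤ w i) (hw1 : ∑' i, w i = 1) (ω : Ω) :
    |randProb w Z A ω| ≤ 1 :=
  abs_tsum_mul_le_one hw hw1 fun i => abs_indicator_one_le_one A (Z i ω)

section IIDIndicators

variable {Ω E : Type*} [MeasurableSpace Ω] [MeasurableSpace E] {P : Measure Ω} {G : Measure E}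
  {Z : ℕ → Ω → E} {A : Set E}

lemma measurable_indicator_one_comp (hZ : ∀ i, Measurable (Z i)) (hA : MeasurableSet A)
    (i : ℕ) : Measurable fun ω => A.indicator (fun _ => (1 : ℝ)) (Z i ω) :=
  (measurable_const.indicator hA).comp (hZ i)

lemma measurable_randProb (hZ : ∀ i, Measurable (Z i)) (hA : MeasurableSet A) (w : ℕ → ℝ) :
    Measurable (randProb w Z A) :=
  Measurable.tsum fun i => (measurable_indicator_one_comp hZ hA i).const_mul (w i)

lemma integral_indicator_one_comp (hZ : ∀ i, Measurable (Z i)) (hdist : ∀ i, P.map (Z i) = G)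
    (hA : MeasurableSet A) (i : ℕ) :
    ∫ ω, A.indicator (fun _ => (1 : ℝ)) (Z i ω) ∂P = G.real A := by
  rw [← integral_map (hZ i).aemeasurable (measurable_const.indicator hA).aestronglyMeasurable,
    hdist i, integral_indicator_const _ hA, smul_eq_mul, mul_one]

lemma integral_indicator_one_comp_mul (hZ : ∀ i, Measurable (Z i)) (hindep : iIndepFun Z P)
    (hdist : ∀ i, P.map (Z i) = G) (hA : MeasurableSet A) (i j : ℕ) :
    ∫ ω, A.indicator (fun _ => (1 : ℝ)) (Z i ω) * A.indicator (fun _ => (1 : ℝ)) (Z j ω) ∂P =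
      if i = j then G.real A else G.real A ^ 2 := by
  by_cases hij : i = j
  · subst hij
    have hidem : ∀ x, A.indicator (fun _ => (1 : ℝ)) x * A.indicator (fun _ => (1 : ℝ)) x =
        A.indicator (fun _ => (1 : ℝ)) x := fun x => by
      by_cases hx : x ∈ A <;> simp [hx]
    simp only [hidem, if_true, integral_indicator_one_comp hZ hdist hA]
  · have hmeas : Measurable (A.indicator fun _ => (1 : ℝ)) := measurable_const.indicator hA
    have hXij := (hindep.indepFun hij).comp hmeas hmeas
    rw [if_neg hij, sq]
    calc _ = (∫ ω, A.indicator (fun _ => (1 : ℝ)) (Z i ω) ∂P) *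
          ∫ ω, A.indicator (fun _ => (1 : ℝ)) (Z j ω) ∂P :=
          hXij.integral_mul_eq_mul_integral
            (measurable_indicator_one_comp hZ hA i).aestronglyMeasurable
            (measurable_indicator_one_comp hZ hA j).aestronglyMeasurable
      _ = G.real A * G.real A := by
          rw [integral_indicator_one_comp hZ hdist hA i, integral_indicator_one_comp hZ hdist hA j]

lemma integral_randProb [IsFiniteMeasure P] (hZ : ∀ i, Measurable (Z i))
    (hdist : ∀ i, P.map (Z i) = G) (hA : MeasurableSet A) {w : ℕ → ℝ} (hw1 : ∑' i, w i = 1) :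
    ∫ ω, randProb w Z A ω ∂P = G.real A := by
  unfold randProb
  rw [integral_tsum_mul_of_abs_le_one (summable_of_tsum_eq_one hw1)
    (fun i => (measurable_indicator_one_comp hZ hA i).aestronglyMeasurable)
    (fun i ω => abs_indicator_one_le_one A (Z i ω))]
  simp_rw [integral_indicator_one_comp hZ hdist hA, tsum_mul_right, hw1, one_mul]

lemma integral_indicator_one_comp_mul_randProb [IsFiniteMeasure P] (hZ : ∀ i, Measurable (Z i))
    (hindep : iIndepFun Z P) (hdist : ∀ i, P.map (Z i) = G) (hA : MeasurableSet A)
    {w : ℕ → ℝ} (hw1 : ∑' i, w i = 1) (i : ℕ) :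
    ∫ ω, A.indicator (fun _ => (1 : ℝ)) (Z i ω) * randProb w Z A ω ∂P =
      G.real A ^ 2 + G.real A * (1 - G.real A) * w i := by
  have hsw := summable_of_tsum_eq_one hw1
  simp_rw [randProb, ← tsum_mul_left, mul_left_comm (A.indicator _ (Z i _))]
  rw [integral_tsum_mul_of_abs_le_one hsw
    (f := fun j ω => A.indicator (fun _ => (1 : ℝ)) (Z i ω) * A.indicator (fun _ => 1) (Z j ω))
    (fun j => ((measurable_indicator_one_comp hZ hA i).mul
      (measurable_indicator_one_comp hZ hA j)).aestronglyMeasurable)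
    (fun j ω => by
      rw [abs_mul]
      exact mul_le_one₀ (abs_indicator_one_le_one A _) (abs_nonneg _)
        (abs_indicator_one_le_one A _))]
  simp_rw [integral_indicator_one_comp_mul hZ hindep hdist hA i]
  rw [tsum_mul_ite_eq hsw, hw1]
  ring

lemma integral_randProb_mul_randProb [IsFiniteMeasure P] (hZ : ∀ i, Measurable (Z i))
    (hindep : iIndepFun Z P) (hdist : ∀ i, P.map (Z i) = G) (hA : MeasurableSet A) {w w' : ℕ → ℝ}
    (hw : ∀ i, 0 ≤ w i) (hw' : ∀ i, 0 ≤ w' i) (hw1 : ∑' i, w i = 1) (hw'1 : ∑' i, w' i = 1) :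
    ∫ ω, randProb w Z A ω * randProb w' Z A ω ∂P =
      G.real A ^ 2 + G.real A * (1 - G.real A) * ∑' i, w i * w' i := by
  have hsw := summable_of_tsum_eq_one hw1
  have hsw' := summable_of_tsum_eq_one hw'1
  have hsww' : Summable fun i => w i * w' i :=
    hsw.of_nonneg_of_le (fun i => mul_nonneg (hw i) (hw' i)) fun i =>
      mul_le_of_le_one_right (hw i) (hw'1 ▸ hsw'.le_tsum i fun j _ => hw' j)
  have hprod : ∀ ω, randProb w Z A ω * randProb w' Z A ω =
      ∑' i, w i * (A.indicator (fun _ => (1 : ℝ)) (Z i ω) * randProb w' Z A ω) := fun ω => by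
    rw [randProb, ← tsum_mul_right]
    simp_rw [mul_assoc]
  simp_rw [hprod]
  rw [integral_tsum_mul_of_abs_le_one hsw
    (f := fun i ω => A.indicator (fun _ => (1 : ℝ)) (Z i ω) * randProb w' Z A ω)
    (fun i => ((measurable_indicator_one_comp hZ hA i).mul
      (measurable_randProb hZ hA w')).aestronglyMeasurable)
    (fun i ω => by
      rw [abs_mul]
      exact mul_le_one₀ (abs_indicator_one_le_one A _) (abs_nonneg _)
        (abs_randProb_le_one hw' hw'1 ω))]
  have hterm : ∀ i, w i * (G.real A ^ 2 + G.real A * (1 - G.real A) * w' i) =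
      G.real A ^ 2 * w i + G.real A * (1 - G.real A) * (w i * w' i) := fun i => by ring
  simp_rw [integral_indicator_one_comp_mul_randProb hZ hindep hdist hA hw'1, hterm]
  rw [(hsw.mul_left _).tsum_add (hsww'.mul_left _), tsum_mul_left, tsum_mul_left, hw1, mul_one]

end IIDIndicators

lemma mul_div_sqrt_mul_mul_cancel {c a b d : ℝ} (hc : 0 < c) :
    c * a / √((c * b) * (c * d)) = a / √(b * d) := by
  rw [mul_mul_mul_comm, Real.sqrt_mul (mul_self_nonneg c), Real.sqrt_mul_self hc.le,
    mul_div_mul_left _ _ hc.ne']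

theorem stmt8_general {Ω E : Type*} [MeasurableSpace Ω] [MeasurableSpace E]
    (P : Measure Ω) [IsProbabilityMeasure P]
    (G : Measure E)
    (Z : ℕ → Ω → E) (hZmeas : ∀ i, Measurable (Z i))
    (hindep : iIndepFun Z P)
    (hdist : ∀ i, P.map (Z i) = G)
    (w w' : ℕ → ℝ) (hw : ∀ i, 0 ≤ w i) (hw' : ∀ i, 0 ≤ w' i)
    (hw1 : ∑' i, w i = 1) (hw'1 : ∑' i, w' i = 1)
    (A : Set E) (hA : MeasurableSet A) (hA0 : 0 < G A) (hA1 : G A < 1) :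
    ((∫ ω, randProb w Z A ω * randProb w' Z A ω ∂P) -
        (∫ ω, randProb w Z A ω ∂P) * (∫ ω, randProb w' Z A ω ∂P)) /
      Real.sqrt
        (((∫ ω, (randProb w Z A ω) ^ 2 ∂P) - (∫ ω, randProb w Z A ω ∂P) ^ 2) *
          ((∫ ω, (randProb w' Z A ω) ^ 2 ∂P) - (∫ ω, randProb w' Z A ω ∂P) ^ 2)) =
      (∑' i, w i * w' i) /
        Real.sqrt ((∑' i, (w i) ^ 2) * (∑' i, (w' i) ^ 2)) := by
  have hp0 : 0 < G.real A := ENNReal.toReal_pos hA0.ne' hA1.ne_top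
  have hp1 : G.real A < 1 := by
    simpa [measureReal_def] using (ENNReal.toReal_lt_toReal hA1.ne_top ENNReal.one_ne_top).2 hA1
  simp only [sq]
  rw [integral_randProb_mul_randProb hZmeas hindep hdist hA hw hw' hw1 hw'1,
    integral_randProb_mul_randProb hZmeas hindep hdist hA hw hw hw1 hw1,
    integral_randProb_mul_randProb hZmeas hindep hdist hA hw' hw' hw'1 hw'1,
    integral_randProb hZmeas hdist hA hw1, integral_randProb hZmeas hdist hA hw'1]
  simp only [sq, add_sub_cancel_left]
  exact mul_div_sqrt_mul_mul_cancel (mul_pos hp0 (sub_pos.2 hp1))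

/-- For an i.i.d. sequence `Z₁, Z₂, …` with common distribution `G`, weight sequences
`w, w'` of nonnegative reals summing to one, and a measurable `A` with `0 < G(A) < 1`,
the correlation `Cov(P_w(A), P_{w'}(A)) / √(Var(P_w(A))·Var(P_{w'}(A)))` equals
`Σᵢ wᵢw'ᵢ / √((Σᵢ wᵢ²)·(Σᵢ w'ᵢ²))`; in particular it does not depend on `A`. -/
theorem stmt8 {Ω E : Type*} [MeasurableSpace Ω] [MeasurableSpace E]
    (P : Measure Ω) [IsProbabilityMeasure P]
    (G : Measure E) [IsProbabilityMeasure G]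
    (Z : ℕ → Ω → E) (hZmeas : ∀ i, Measurable (Z i))
    (hindep : iIndepFun Z P)
    (hdist : ∀ i, P.map (Z i) = G)
    (w w' : ℕ → ℝ) (hw : ∀ i, 0 ≤ w i) (hw' : ∀ i, 0 ≤ w' i)
    (hw1 : ∑' i, w i = 1) (hw'1 : ∑' i, w' i = 1)
    (A : Set E) (hA : MeasurableSet A) (hA0 : 0 < G A) (hA1 : G A < 1) :
    ((∫ ω, randProb w Z A ω * randProb w' Z A ω ∂P) -
        (∫ ω, randProb w Z A ω ∂P) * (∫ ω, randProb w' Z A ω ∂P)) /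
      Real.sqrt
        (((∫ ω, (randProb w Z A ω) ^ 2 ∂P) - (∫ ω, randProb w Z A ω ∂P) ^ 2) *
          ((∫ ω, (randProb w' Z A ω) ^ 2 ∂P) - (∫ ω, randProb w' Z A ω ∂P) ^ 2)) =
      (∑' i, w i * w' i) /
        Real.sqrt ((∑' i, (w i) ^ 2) * (∑' i, (w' i) ^ 2)) :=
  stmt8_general P G Z hZmeas hindep hdist w w' hw hw' hw1 hw'1 A hA hA0 hA1
end

section
/- Let k ≥ 1 be an integer, μ ∈ ℝ, and s > 0. Set μ̂ = (μ + √(μ² + 8k·s²))/2 and ŝ² = (2k/μ̂² + 1/s²)^(−1). Then for every x > 0, 2k·log x − (x−μ)²/(2s²) + (x−μ̂)²/(2ŝ²) = V(x; k, μ̂) + 2k·log μ̂ − (μ̂−μ)²/(2s²), where V(x; k, μ̂) = 2k·[log(x/μ̂) − (x/μ̂ − 1) + (1/2)·(x/μ̂ − 1)²]. (This is the key identity of Appendix D: the log-ratio of the density proportional to x^(2k)·exp(−(x−μ)²/(2s²)) on (0,∞) to its Laplace Gaussian approximation N(μ̂, ŝ²) equals V(x; k, μ̂) plus a constant.) -/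
open Real

/-- `V(x; k, μ) = 2k·[log(x/μ) − (x/μ − 1) + (1/2)·(x/μ − 1)²]` for `x > 0`. -/
noncomputable def Vfun (k : ℕ) (μ x : ℝ) : ℝ :=
  2 * k * (Real.log (x / μ) - (x / μ - 1) + (1/2) * (x / μ - 1) ^ 2)

/-! The mode `μ̂` of `x ↦ x ^ (2k) · exp (-(x - μ)² / (2s²))` is the positive root of
`t² = μ t + 2k s²`, i.e. the zero of the derivative `2k/t - (t - μ)/s²` of the log-density.
Expanding around `μ̂`, the log-ratio to `N(μ̂, ŝ²)` equals `V(x; k, μ̂)` plus a constant plus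
`(x - μ̂)` times that derivative at `μ̂`, which vanishes. -/

lemma sq_eq_mul_add_of_eq_quadratic_root {μ c t : ℝ} (hc : 0 ≤ c)
    (ht : t = (μ + √(μ ^ 2 + 4 * c)) / 2) : t ^ 2 = μ * t + c := by
  have hsq : √(μ ^ 2 + 4 * c) ^ 2 = μ ^ 2 + 4 * c := sq_sqrt (by positivity)
  subst ht
  linear_combination hsq / 4

lemma quadratic_root_pos {μ c : ℝ} (hc : 0 < c) : 0 < (μ + √(μ ^ 2 + 4 * c)) / 2 := by
  have : |μ| < √(μ ^ 2 + 4 * c) := by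
    rw [← sqrt_sq_eq_abs]
    exact sqrt_lt_sqrt (sq_nonneg μ) (by linarith)
  linarith [neg_abs_le μ]

lemma div_eq_div_of_sq_eq_mul_add {k μ s t : ℝ} (hs : s ≠ 0) (ht : t ≠ 0)
    (hroot : t ^ 2 = μ * t + 2 * k * s ^ 2) : 2 * k / t = (t - μ) / s ^ 2 := by
  rw [div_eq_div_iff ht (pow_ne_zero 2 hs)]
  linear_combination -hroot

lemma log_ratio_eq_Vfun_add (k : ℕ) {μ s a x shat2 : ℝ} (ha : a ≠ 0) (hx : x ≠ 0)
    (hshat2 : shat2 = (2 * k / a ^ 2 + 1 / s ^ 2)⁻¹) :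
    2 * k * log x - (x - μ) ^ 2 / (2 * s ^ 2) + (x - a) ^ 2 / (2 * shat2) =
      Vfun k a x + 2 * k * log a - (a - μ) ^ 2 / (2 * s ^ 2) +
        (x - a) * (2 * k / a - (a - μ) / s ^ 2) := by
  have hdiv : (x - a) ^ 2 / (2 * shat2) = (x - a) ^ 2 * (2 * k / a ^ 2 + 1 / s ^ 2) / 2 := by
    rw [hshat2, div_eq_mul_inv, mul_inv, inv_inv]; ring
  rw [Vfun, log_div hx ha, hdiv]
  field_simp
  ring

/-- For `k ≥ 1`, `μ ∈ ℝ`, `s > 0`, with `μ̂ = (μ + √(μ² + 8k·s²))/2` and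
`ŝ² = (2k/μ̂² + 1/s²)⁻¹`, for every `x > 0`:
`2k·log x − (x−μ)²/(2s²) + (x−μ̂)²/(2ŝ²) = V(x; k, μ̂) + 2k·log μ̂ − (μ̂−μ)²/(2s²)`. -/
theorem stmt11 (k : ℕ) (hk : 1 ≤ k) (μ s : ℝ) (hs : 0 < s)
    (μhat shat2 : ℝ)
    (hμhat : μhat = (μ + Real.sqrt (μ ^ 2 + 8 * k * s ^ 2)) / 2)
    (hshat2 : shat2 = (2 * k / μhat ^ 2 + 1 / s ^ 2)⁻¹) :
    ∀ x : ℝ, 0 < x →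
      2 * k * Real.log x - (x - μ) ^ 2 / (2 * s ^ 2) + (x - μhat) ^ 2 / (2 * shat2) =
        Vfun k μhat x + 2 * k * Real.log μhat - (μhat - μ) ^ 2 / (2 * s ^ 2) := by
  intro x hx
  have hc : (0 : ℝ) < 2 * k * s ^ 2 := by
    have : (0 : ℝ) < k := by exact_mod_cast hk
    positivity
  have hμhat' : μhat = (μ + √(μ ^ 2 + 4 * (2 * k * s ^ 2))) / 2 := by
    rw [hμhat]; ring_nf
  have hpos : 0 < μhat := hμhat' ▸ quadratic_root_pos hc
  have hroot := sq_eq_mul_add_of_eq_quadratic_root hc.le hμhat'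
  rw [log_ratio_eq_Vfun_add k hpos.ne' hx.ne' hshat2,
    div_eq_div_of_sq_eq_mul_add hs.ne' hpos.ne' hroot, sub_self, mul_zero, add_zero]
end
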